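/- Let H be a complex separable Hilbert space, A ∈ B(H), and G ⊂ H a countable family of vectors such that {e^{tA}g}_{g∈G, t∈[0,∞)} is a semi-continuous frame for H. If the semigroup {e^{tA}}_{t≥0} is exponentially stable, then there exists 0 < L < ∞ such that {e^{tA}g}_{g∈G, t∈[0,L]} is a semi-continuous frame for H. -/

import Mathlib

/-! Split the time integral at `L`. Because `e^{(s+L)A} = e^{LA} e^{sA}`, the tail
`∑_g ∫_L^∞ |⟪f, e^{tA} g⟫|² dt` is the full frame sum of the vector `(e^{LA})* f`, hence at most
`C ‖e^{LA}‖² ‖f‖²`. Exponential stability makes `‖e^{LA}‖ → 0`, so for large `L` the tail is at most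
half the lower frame bound `c ‖f‖²`, and `[0, L]` keeps the lower bound `c / 2`. Stability also
makes every coefficient `t ↦ |⟪f, e^{tA} g⟫|²` integrable on `[0, ∞)`, which the splitting needs. -/

open MeasureTheory
open scoped ComplexInnerProductSpace

noncomputable section

variable {H : Type*} [NormedAddCommGroup H] [InnerProductSpace ℂ H] [CompleteSpace H]

/-- The operator exponential `e^{tA}` for a bounded operator `A`. -/
def expT (A : H →L[ℂ] H) (t : ℝ) : H →L[ℂ] H :=
  NormedSpace.exp ((t : ℂ) • A)

/-- `G` is a Bessel system in `H`. -/
def IsBesselSet (G : Set H) : Prop :=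
  ∃ K > (0 : ℝ), ∀ f : H, ∑' g : G, ‖⟪f, (g : H)⟫‖ ^ 2 ≤ K * ‖f‖ ^ 2

/-- `{e^{tA} g}_{g ∈ G, t ∈ S}` is a semi-continuous frame for `H`. -/
def SemiContFrame (A : H →L[ℂ] H) (G : Set H) (S : Set ℝ) : Prop :=
  ∃ c > (0 : ℝ), ∃ C > (0 : ℝ), ∀ f : H,
    c * ‖f‖ ^ 2 ≤ ∑' g : G, ∫ t in S, ‖⟪f, expT A t (g : H)⟫‖ ^ 2 ∧
    ∑' g : G, ∫ t in S, ‖⟪f, expT A t (g : H)⟫‖ ^ 2 ≤ C * ‖f‖ ^ 2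

/-- `{e^{t_j A} g}_{g ∈ G, j}` is a frame for `H`, for a finite list of times `t`. -/
def FinTimeFrame (A : H →L[ℂ] H) (G : Set H) {n : ℕ} (t : Fin n → ℝ) : Prop :=
  ∃ c > (0 : ℝ), ∃ C > (0 : ℝ), ∀ f : H,
    c * ‖f‖ ^ 2 ≤ ∑' g : G, ∑ j, ‖⟪f, expT A (t j) (g : H)⟫‖ ^ 2 ∧
    ∑' g : G, ∑ j, ‖⟪f, expT A (t j) (g : H)⟫‖ ^ 2 ≤ C * ‖f‖ ^ 2

/-- `{e^{t_j A} g}_{g ∈ G, j ∈ ℕ}` is a frame for `H`, for a countable set of times `t`. -/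
def NatTimeFrame (A : H →L[ℂ] H) (G : Set H) (t : ℕ → ℝ) : Prop :=
  ∃ c > (0 : ℝ), ∃ C > (0 : ℝ), ∀ f : H,
    c * ‖f‖ ^ 2 ≤ ∑' g : G, ∑' j : ℕ, ‖⟪f, expT A (t j) (g : H)⟫‖ ^ 2 ∧
    ∑' g : G, ∑' j : ℕ, ‖⟪f, expT A (t j) (g : H)⟫‖ ^ 2 ≤ C * ‖f‖ ^ 2

/-- The semigroup `{e^{tA}}_{t ≥ 0}` is exponentially stable. -/
def ExpStable (A : H →L[ℂ] H) : Prop :=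
  ∃ M ≥ (1 : ℝ), ∃ ω < (0 : ℝ), ∀ t : ℝ, 0 ≤ t → ‖expT A t‖ ≤ M * Real.exp (ω * t)

open Set Filter Topology ContinuousLinearMap

lemma setIntegral_Ici_comp_add_right {E : Type*} [NormedAddCommGroup E] [NormedSpace ℝ E]
    (F : ℝ → E) (a b : ℝ) : ∫ x in Ici b, F (x + a) = ∫ x in Ici (b + a), F x := by
  rw [← (measurePreserving_add_right volume a).setIntegral_preimage_emb
    (MeasurableEquiv.addRight a).measurableEmbedding F (Ici (b + a)), preimage_add_const_Ici,
    add_sub_cancel_right]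

lemma setIntegral_Ici_eq_Icc_add_Ioi {E : Type*} [NormedAddCommGroup E] [NormedSpace ℝ E]
    {F : ℝ → E} {a b : ℝ} (hab : a ≤ b) (hF : IntegrableOn F (Ici a)) :
    ∫ t in Ici a, F t = (∫ t in Icc a b, F t) + ∫ t in Ioi b, F t := by
  rw [← Icc_union_Ioi_eq_Ici hab]
  exact setIntegral_union ((Iic_disjoint_Ioi le_rfl).mono_left Icc_subset_Iic_self)
    measurableSet_Ioi (hF.mono_set Icc_subset_Ici_self) (hF.mono_set (Ioi_subset_Ici hab))

lemma tsum_add_of_nonneg {ι : Type*} {a b : ι → ℝ} (ha : ∀ i, 0 ≤ a i) (hb : ∀ i, 0 ≤ b i)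
    (hab : Summable fun i => a i + b i) : ∑' i, (a i + b i) = ∑' i, a i + ∑' i, b i :=
  (hab.of_nonneg_of_le ha fun i => le_add_of_nonneg_right (hb i)).tsum_add
    (hab.of_nonneg_of_le hb fun i => le_add_of_nonneg_left (ha i))

lemma expT_add (A : H →L[ℂ] H) (s t : ℝ) : expT A (s + t) = expT A s * expT A t := by
  let : NormedAlgebra ℚ (H →L[ℂ] H) := NormedAlgebra.restrictScalars ℚ ℂ _
  rw [expT, expT, expT, Complex.ofReal_add, add_smul]
  exact NormedSpace.exp_add_of_commute (((Commute.refl A).smul_left _).smul_right _)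

lemma continuous_expT (A : H →L[ℂ] H) : Continuous (expT A) := by
  let : NormedAlgebra ℚ (H →L[ℂ] H) := NormedAlgebra.restrictScalars ℚ ℂ _
  exact NormedSpace.exp_continuous.comp (Complex.continuous_ofReal.smul continuous_const)

lemma continuous_norm_inner_expT_sq (A : H →L[ℂ] H) (f g : H) :
    Continuous fun t => ‖⟪f, expT A t g⟫‖ ^ 2 := by
  have := continuous_expT A
  fun_prop

lemma setIntegral_Ioi_norm_inner_expT_sq_eq_adjoint (A : H →L[ℂ] H) (L : ℝ) (f g : H) :
    ∫ t in Ioi L, ‖⟪f, expT A t g⟫‖ ^ 2 =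
      ∫ t in Ici 0, ‖⟪adjoint (expT A L) f, expT A t g⟫‖ ^ 2 := by
  simp_rw [adjoint_inner_left, ← mul_apply_eq_comp, ← expT_add, add_comm L]
  rw [setIntegral_Ici_comp_add_right (fun t => ‖⟪f, expT A t g⟫‖ ^ 2), zero_add,
    integral_Ici_eq_integral_Ioi]

namespace ExpStable

variable {A : H →L[ℂ] H}

lemma tendsto_norm_expT (h : ExpStable A) : Tendsto (fun t => ‖expT A t‖) atTop (𝓝 0) := by
  obtain ⟨M, -, ω, hω, hbound⟩ := h
  have hmajorant : Tendsto (fun t => M * Real.exp (ω * t)) atTop (𝓝 0) := by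
    simpa using (Real.tendsto_exp_atBot.comp (tendsto_id.const_mul_atTop_of_neg hω)).const_mul M
  exact squeeze_zero' (.of_forall fun _ => norm_nonneg _)
    ((eventually_ge_atTop 0).mono hbound) hmajorant

lemma integrableOn_norm_inner_expT_sq (h : ExpStable A) (f g : H) :
    IntegrableOn (fun t => ‖⟪f, expT A t g⟫‖ ^ 2) (Ici 0) := by
  obtain ⟨M, -, ω, hω, hbound⟩ := h
  have hmajorant : IntegrableOn (fun t => (M * ‖f‖ * ‖g‖) ^ 2 * Real.exp (2 * ω * t)) (Ici 0) :=
    ((integrableOn_exp_mul_Ioi (by linarith) (-1)).mono_set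
      (Ici_subset_Ioi.2 (by norm_num))).const_mul _
  refine hmajorant.mono' (continuous_norm_inner_expT_sq A f g).aestronglyMeasurable.restrict ?_
  filter_upwards [ae_restrict_mem measurableSet_Ici] with t ht
  calc ‖‖⟪f, expT A t g⟫‖ ^ 2‖ = ‖⟪f, expT A t g⟫‖ ^ 2 := by simp
    _ ≤ (‖f‖ * (‖expT A t‖ * ‖g‖)) ^ 2 := by
      gcongr
      exact (norm_inner_le_norm _ _).trans (by gcongr; exact le_opNorm _ _)
    _ ≤ (‖f‖ * (M * Real.exp (ω * t) * ‖g‖)) ^ 2 := by gcongr; exact hbound t ht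
    _ = (M * ‖f‖ * ‖g‖) ^ 2 * Real.exp (2 * ω * t) := by
      rw [two_mul, add_mul, Real.exp_add]; ring

end ExpStable

lemma tsum_setIntegral_Ioi_le {A : H →L[ℂ] H} {G : Set H} {C : ℝ} (hC : 0 ≤ C)
    (hbound : ∀ f, ∑' g : G, ∫ t in Ici 0, ‖⟪f, expT A t g⟫‖ ^ 2 ≤ C * ‖f‖ ^ 2) (L : ℝ) (f : H) :
    ∑' g : G, ∫ t in Ioi L, ‖⟪f, expT A t g⟫‖ ^ 2 ≤ C * ‖expT A L‖ ^ 2 * ‖f‖ ^ 2 := by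
  simp_rw [setIntegral_Ioi_norm_inner_expT_sq_eq_adjoint A L f]
  calc _ ≤ C * ‖adjoint (expT A L) f‖ ^ 2 := hbound _
    _ ≤ C * (‖expT A L‖ * ‖f‖) ^ 2 := by
      gcongr
      exact ((adjoint (expT A L)).le_opNorm f).trans_eq (by rw [LinearIsometryEquiv.norm_map])
    _ = C * ‖expT A L‖ ^ 2 * ‖f‖ ^ 2 := by ring

namespace SemiContFrame

variable {A : H →L[ℂ] H} {G : Set H}

lemma summable {S : Set ℝ} (h : SemiContFrame A G S) (f : H) :
    Summable fun g : G => ∫ t in S, ‖⟪f, expT A t g⟫‖ ^ 2 := by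
  obtain ⟨c, hc, _, _, hbounds⟩ := h
  rcases eq_or_ne f 0 with rfl | hf
  · simp
  -- a non-summable family has `tsum` zero, which the lower frame bound rules out
  by_contra hns
  have hlower := (hbounds f).1
  rw [tsum_eq_zero_of_not_summable hns] at hlower
  linarith [mul_pos hc (pow_pos (norm_pos_iff.2 hf) 2)]

lemma tsum_Ici_eq_Icc_add_Ioi (h : SemiContFrame A G (Ici 0)) (hA : ExpStable A) {L : ℝ}
    (hL : 0 ≤ L) (f : H) :
    ∑' g : G, ∫ t in Ici 0, ‖⟪f, expT A t g⟫‖ ^ 2 =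
      ∑' g : G, (∫ t in Icc 0 L, ‖⟪f, expT A t g⟫‖ ^ 2) +
        ∑' g : G, ∫ t in Ioi L, ‖⟪f, expT A t g⟫‖ ^ 2 := by
  have hsplit (g : G) := setIntegral_Ici_eq_Icc_add_Ioi hL (hA.integrableOn_norm_inner_expT_sq f g)
  simp_rw [hsplit]
  refine tsum_add_of_nonneg (fun _ => ?_) (fun _ => ?_) ?_
  · exact integral_nonneg fun _ => by positivity
  · exact integral_nonneg fun _ => by positivity
  · simpa only [hsplit] using h.summable f

end SemiContFrame

theorem stmt3_general
    {H : Type*} [NormedAddCommGroup H] [InnerProductSpace ℂ H] [CompleteSpace H]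
    (A : H →L[ℂ] H) (G : Set H)
    (hframe : SemiContFrame A G (Set.Ici 0))
    (hstable : ExpStable A) :
    ∃ L : ℝ, 0 < L ∧ SemiContFrame A G (Set.Icc 0 L) := by
  have ⟨c, hc, C, hC, hbounds⟩ := hframe
  obtain ⟨L, hL, hCL⟩ : ∃ L, 0 < L ∧ C * ‖expT A L‖ ^ 2 ≤ c / 2 := by
    have hdecay : Tendsto (fun t => C * ‖expT A t‖ ^ 2) atTop (𝓝 0) := by
      simpa using (hstable.tendsto_norm_expT.pow 2).const_mul C
    exact ((eventually_gt_atTop 0).and (hdecay.eventually (ge_mem_nhds (by positivity)))).exists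
  refine ⟨L, hL, c / 2, by positivity, C, hC, fun f => ?_⟩
  have hsplit := hframe.tsum_Ici_eq_Icc_add_Ioi hstable hL.le f
  have htail := tsum_setIntegral_Ioi_le hC.le (fun f => (hbounds f).2) L f
  have htail_nonneg : 0 ≤ ∑' g : G, ∫ t in Ioi L, ‖⟪f, expT A t g⟫‖ ^ 2 :=
    tsum_nonneg fun _ => integral_nonneg fun _ => by positivity
  constructor
  · linarith [(hbounds f).1, mul_le_mul_of_nonneg_right hCL (sq_nonneg ‖f‖)]
  · linarith [(hbounds f).2]

theorem stmt3
    {H : Type*} [NormedAddCommGroup H] [InnerProductSpace ℂ H] [CompleteSpace H]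
    [TopologicalSpace.SeparableSpace H]
    (A : H →L[ℂ] H) (G : Set H) (hGc : G.Countable)
    (hframe : SemiContFrame A G (Set.Ici 0))
    (hstable : ExpStable A) :
    ∃ L : ℝ, 0 < L ∧ SemiContFrame A G (Set.Icc 0 L) :=
  stmt3_general A G hframe hstable

end
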